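/- Let a, b, c, d be nonnegative real numbers with b + d > 0 and a + c > 0, and consider the function L(p,q) = (1-p)^a · p^b · (1-q)^c · q^d on the constrained region {(p,q) ∈ [0,1]² : p ≤ q}. If a·d ≥ b·c (equivalently d/(c+d) ≥ b/(a+b) when a+b, c+d > 0), then L is maximized at p = b/(a+b), q = d/(c+d). If a·d < b·c, then L is maximized on the constraint boundary at p = q = (b+d)/(a+b+c+d). -/

import Mathlib

/-!
Both bounds are instances of the Gibbs form of weighted AM-GM: for weights `wᵢ ≥ 0`, points
`xᵢ ≥ 0` and `mᵢ > 0`, AM-GM applied to the ratios `xᵢ / mᵢ` gives `∏ xᵢ ^ wᵢ ≤ ∏ mᵢ ^ wᵢ` as soon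
as `∑ wᵢ xᵢ / mᵢ ≤ ∑ wᵢ`. With the two-point weights `(u, v)` and `m = (u, v) / (u + v)` this says
that the binomial likelihood `(1 - x) ^ u * x ^ v` peaks at `x = v / (u + v)`, which handles the
unconstrained maximum factor by factor. For the constrained maximum take `m = (1 - t, t, 1 - t, t)`
with the pooled proportion `t = (b + d) / (a + b + c + d)`: the weighted sum of ratios is at most
`a + b + c + d` exactly when `(q - p) (b c - a d) ≥ 0`.
-/

open Finset

namespace Real

theorem prod_rpow_le_prod_rpow_of_sum_mul_div_le {ι : Type*} (s : Finset ι) {w x m : ι → ℝ}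
    (hw : ∀ i ∈ s, 0 ≤ w i) (hx : ∀ i ∈ s, 0 ≤ x i) (hm : ∀ i ∈ s, 0 < m i)
    (h : ∑ i ∈ s, w i * (x i / m i) ≤ ∑ i ∈ s, w i) :
    ∏ i ∈ s, x i ^ w i ≤ ∏ i ∈ s, m i ^ w i := by
  have hz : ∀ i ∈ s, 0 ≤ x i / m i := fun i hi => div_nonneg (hx i hi) (hm i hi).le
  have hsplit : ∏ i ∈ s, x i ^ w i = (∏ i ∈ s, m i ^ w i) * ∏ i ∈ s, (x i / m i) ^ w i := by
    rw [← prod_mul_distrib]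
    refine prod_congr rfl fun i hi => ?_
    rw [← mul_rpow (hm i hi).le (hz i hi), mul_div_cancel₀ _ (hm i hi).ne']
  have hratio : ∏ i ∈ s, (x i / m i) ^ w i ≤ 1 := by
    rcases (sum_nonneg hw).eq_or_lt with hW | hW
    · refine (prod_eq_one fun i hi => ?_).le
      rw [(sum_eq_zero_iff_of_nonneg hw).1 hW.symm i hi, rpow_zero]
    · have hmean_nonneg : 0 ≤ (∑ i ∈ s, w i * (x i / m i)) / ∑ i ∈ s, w i :=
        div_nonneg (sum_nonneg fun i hi => mul_nonneg (hw i hi) (hz i hi)) hW.le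
      have hmean := geom_mean_le_arith_mean s w _ hw hW hz
      rw [rpow_inv_le_iff_of_pos (prod_nonneg fun i hi => rpow_nonneg (hz i hi) _)
        hmean_nonneg hW] at hmean
      exact hmean.trans (rpow_le_one hmean_nonneg ((div_le_one hW).2 h) hW.le)
  rw [hsplit]
  exact mul_le_of_le_one_right (prod_nonneg fun i hi => rpow_nonneg (hm i hi).le _) hratio

theorem one_sub_rpow_mul_rpow_le {u v x : ℝ} (hu : 0 ≤ u) (hv : 0 ≤ v) (hx₀ : 0 ≤ x)
    (hx₁ : x ≤ 1) : (1 - x) ^ u * x ^ v ≤ (1 - v / (u + v)) ^ u * (v / (u + v)) ^ v := by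
  rcases hu.eq_or_lt with rfl | hu
  · rcases hv.eq_or_lt with rfl | hv
    · simp
    · simpa [hv.ne'] using rpow_le_one hx₀ hx₁ hv.le
  rcases hv.eq_or_lt with rfl | hv
  · simpa using rpow_le_one (sub_nonneg.2 hx₁) (by linarith) hu.le
  have huv : 0 < u + v := add_pos hu hv
  have hcompl : 1 - v / (u + v) = u / (u + v) := by field_simp; ring
  have hsum : u * ((1 - x) / (u / (u + v))) + v * (x / (v / (u + v))) = u + v := by
    field_simp; ring
  rw [hcompl]
  simpa [Fin.prod_univ_two, Fin.sum_univ_two] using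
    prod_rpow_le_prod_rpow_of_sum_mul_div_le univ (w := ![u, v]) (x := ![1 - x, x])
      (m := ![u / (u + v), v / (u + v)]) (by simp [Fin.forall_fin_two, hu.le, hv.le])
      (by simp [Fin.forall_fin_two, hx₀, hx₁])
      (by simp [Fin.forall_fin_two, div_pos hu huv, div_pos hv huv])
      (by simp [Fin.sum_univ_two, hsum])

end Real

open Real

theorem rpow_mul_rpow_mul_rpow_mul_rpow_le_pooled {a b c d p q : ℝ} (ha : 0 ≤ a) (hb : 0 ≤ b)
    (hc : 0 ≤ c) (hd : 0 ≤ d) (hbd : 0 < b + d) (hac : 0 < a + c) (hadbc : a * d ≤ b * c)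
    (hp : 0 ≤ p) (hpq : p ≤ q) (hq : q ≤ 1) :
    (1 - p) ^ a * p ^ b * (1 - q) ^ c * q ^ d
      ≤ (1 - (b + d) / (a + b + c + d)) ^ a * ((b + d) / (a + b + c + d)) ^ b
          * (1 - (b + d) / (a + b + c + d)) ^ c * ((b + d) / (a + b + c + d)) ^ d := by
  have hS : 0 < a + b + c + d := by linarith
  set t := (b + d) / (a + b + c + d) with ht
  have ht₀ : 0 < t := div_pos hbd hS
  have ht₁ : 0 < 1 - t := by rw [sub_pos, div_lt_one hS]; linarith
  have hpool : (b * p + d * q) * (a + c) ≤ (a * p + c * q) * (b + d) := by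
    nlinarith [mul_nonneg (sub_nonneg.2 hpq) (sub_nonneg.2 hadbc)]
  have hsum : a * ((1 - p) / (1 - t)) + b * (p / t) + c * ((1 - q) / (1 - t)) + d * (q / t)
      ≤ a + b + c + d := by
    have hcompl : 1 - t = (a + c) / (a + b + c + d) := by rw [ht]; field_simp; ring
    rw [hcompl, ht]
    field_simp
    nlinarith
  simpa [Fin.prod_univ_four, Fin.sum_univ_four] using
    prod_rpow_le_prod_rpow_of_sum_mul_div_le univ (w := ![a, b, c, d])
      (x := ![1 - p, p, 1 - q, q]) (m := ![1 - t, t, 1 - t, t])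
      (by simp [Fin.forall_fin_succ, ha, hb, hc, hd])
      (by simp [Fin.forall_fin_succ, hp, hp.trans hpq, hq, hpq.trans hq])
      (by simp [Fin.forall_fin_succ, ht₀, ht₁])
      (by simpa [Fin.sum_univ_four] using hsum)

theorem stmt2 (a b c d : ℝ) (ha : 0 ≤ a) (hb : 0 ≤ b) (hc : 0 ≤ c) (hd : 0 ≤ d)
    (hbd : 0 < b + d) (hac : 0 < a + c) :
    (b * c ≤ a * d → ∀ p q : ℝ, 0 ≤ p → p ≤ q → q ≤ 1 →
        (1 - p) ^ a * p ^ b * (1 - q) ^ c * q ^ d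
          ≤ (1 - b / (a + b)) ^ a * (b / (a + b)) ^ b
              * (1 - d / (c + d)) ^ c * (d / (c + d)) ^ d) ∧
    (a * d < b * c → ∀ p q : ℝ, 0 ≤ p → p ≤ q → q ≤ 1 →
        (1 - p) ^ a * p ^ b * (1 - q) ^ c * q ^ d
          ≤ (1 - (b + d) / (a + b + c + d)) ^ a * ((b + d) / (a + b + c + d)) ^ b
              * (1 - (b + d) / (a + b + c + d)) ^ c * ((b + d) / (a + b + c + d)) ^ d) := by
  refine ⟨fun _ p q hp hpq hq => ?_, fun hlt p q hp hpq hq =>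
    rpow_mul_rpow_mul_rpow_mul_rpow_le_pooled ha hb hc hd hbd hac hlt.le hp hpq hq⟩
  have hp₁ : p ≤ 1 := hpq.trans hq
  have hq₀ : 0 ≤ q := hp.trans hpq
  have hfactor_p := one_sub_rpow_mul_rpow_le ha hb hp hp₁
  have hfactor_q := one_sub_rpow_mul_rpow_le hc hd hq₀ hq
  calc (1 - p) ^ a * p ^ b * (1 - q) ^ c * q ^ d
      = ((1 - p) ^ a * p ^ b) * ((1 - q) ^ c * q ^ d) := by ring
    _ ≤ ((1 - b / (a + b)) ^ a * (b / (a + b)) ^ b)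
          * ((1 - d / (c + d)) ^ c * (d / (c + d)) ^ d) :=
        mul_le_mul hfactor_p hfactor_q
          (mul_nonneg (rpow_nonneg (sub_nonneg.2 hq) _) (rpow_nonneg hq₀ _))
          ((mul_nonneg (rpow_nonneg (sub_nonneg.2 hp₁) _) (rpow_nonneg hp _)).trans hfactor_p)
    _ = _ := by ring
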